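/- arXiv:2205.00279 — 5 statements merged into one kernel-verified Lean document; each statement's English description precedes it below -/
import Mathlib

section
/- Let A generate a C₀-semigroup (S_t) on a Banach space X, let K ⊆ X be closed, let x ∈ K ∩ D(A), v ∈ X, and ε ≥ 0. Then liminf_{t→0+} (1/t) d_K(S_t x + t v) ≤ ε holds if and only if liminf_{t→0+} (1/t) d_K(x + t(Ax + v)) ≤ ε. -/
open Metric Filter Topology

private lemma aux_liminf_le {ι : Type*} (F : Filter ι) [F.NeBot] (f g : ι → ℝ)
    (hg0 : ∀ᶠ x in F, 0 ≤ g x)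
    (hgf : ∀ δ : ℝ, 0 < δ → ∀ᶠ x in F, g x ≤ f x + δ)
    (hfg : ∀ δ : ℝ, 0 < δ → ∀ᶠ x in F, f x ≤ g x + δ)
    (ε : ℝ) (hε : 0 ≤ ε) (h : liminf f F ≤ ε) : liminf g F ≤ ε := by
  by_cases hcf : F.IsCoboundedUnder (· ≥ ·) f
  · -- usual case
    refine le_of_forall_pos_le_add fun δ hδ => ?_
    have hfr : ∃ᶠ x in F, f x < ε + δ / 2 :=
      frequently_lt_of_liminf_lt hcf (lt_of_le_of_lt h (by linarith))
    have hev := hgf (δ / 2) (by linarith)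
    have hfreq : ∃ᶠ x in F, g x ≤ ε + δ := by
      refine (hfr.and_eventually hev).mono ?_
      rintro x ⟨h1, h2⟩; linarith
    exact liminf_le_of_frequently_le hfreq ⟨0, hg0⟩
  · -- f not cobounded below: then g isn't either, and liminf g is junk = 0
    have hcg : ¬ F.IsCoboundedUnder (· ≥ ·) g := by
      intro hcg
      apply hcf
      obtain ⟨b, hb⟩ := hcg
      refine ⟨b + 1, fun a ha => ?_⟩
      have : ∀ᶠ x in F.map g, a - 1 ≤ x := by
        rw [eventually_map] at ha ⊢
        filter_upwards [ha, hfg 1 one_pos] with x h1 h2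
        linarith
      have := hb (a - 1) this
      linarith
    have : ¬ BddAbove {a : ℝ | ∀ᶠ x in F, a ≤ g x} := by
      intro ⟨b, hb⟩
      exact hcg ⟨b, fun a ha => hb (eventually_map.mp ha)⟩
    rw [liminf_eq, Real.sSup_of_not_bddAbove this]
    exact hε

theorem liminf_semigroup_iff_liminf_generator
    {X : Type*} [NormedAddCommGroup X] [NormedSpace ℝ X] [CompleteSpace X]
    (S : ℝ → X →L[ℝ] X)
    (hS0 : S 0 = ContinuousLinearMap.id ℝ X)
    (hSadd : ∀ s t : ℝ, 0 ≤ s → 0 ≤ t → S (s + t) = (S s).comp (S t))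
    (hScont : ∀ z : X, ContinuousOn (fun t => S t z) (Set.Ici 0))
    (K : Set X) (hKne : K.Nonempty) (hKcl : IsClosed K)
    (x : X) (hxK : x ∈ K) (Ax : X)
    (hxA : Tendsto (fun t : ℝ => t⁻¹ • (S t x - x)) (𝓝[>] 0) (𝓝 Ax))
    (v : X) (ε : ℝ) (hε : 0 ≤ ε) :
    liminf (fun t : ℝ => (1 / t) * infDist (S t x + t • v) K) (𝓝[>] 0) ≤ ε ↔
      liminf (fun t : ℝ => (1 / t) * infDist (x + t • (Ax + v)) K) (𝓝[>] 0) ≤ ε := by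
  set f : ℝ → ℝ := fun t => (1 / t) * infDist (S t x + t • v) K with hf
  set g : ℝ → ℝ := fun t => (1 / t) * infDist (x + t • (Ax + v)) K with hg
  have hpos : ∀ᶠ t : ℝ in 𝓝[>] 0, 0 < t := self_mem_nhdsWithin
  have hf0 : ∀ᶠ t : ℝ in 𝓝[>] 0, 0 ≤ f t := by
    filter_upwards [hpos] with t ht
    exact mul_nonneg (by positivity) infDist_nonneg
  have hg0 : ∀ᶠ t : ℝ in 𝓝[>] 0, 0 ≤ g t := by
    filter_upwards [hpos] with t ht
    exact mul_nonneg (by positivity) infDist_nonneg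
  -- key estimate
  have key : ∀ δ : ℝ, 0 < δ → ∀ᶠ t : ℝ in 𝓝[>] 0, |f t - g t| ≤ δ := by
    intro δ hδ
    have := hxA (Metric.closedBall_mem_nhds Ax hδ)
    rw [mem_map] at this
    filter_upwards [this, hpos] with t ht htpos
    have hdist : dist (S t x + t • v) (x + t • (Ax + v)) =
        ‖S t x - x - t • Ax‖ := by
      rw [dist_eq_norm]
      congr 1
      rw [smul_add]
      abel
    have h1 : |infDist (S t x + t • v) K - infDist (x + t • (Ax + v)) K| ≤
        ‖S t x - x - t • Ax‖ := by
      rw [← hdist, abs_sub_le_iff]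
      constructor
      · linarith [infDist_le_infDist_add_dist (x := S t x + t • v) (y := x + t • (Ax + v)) (s := K)]
      · rw [dist_comm] at hdist ⊢
        linarith [infDist_le_infDist_add_dist (x := x + t • (Ax + v)) (y := S t x + t • v) (s := K)]
    have h2 : (1 / t) * ‖S t x - x - t • Ax‖ = ‖t⁻¹ • (S t x - x) - Ax‖ := by
      rw [← norm_smul_of_nonneg (by positivity : (0:ℝ) ≤ 1 / t), one_div, smul_sub,
        smul_smul, inv_mul_cancel₀ htpos.ne', one_smul]
    have hmem : ‖t⁻¹ • (S t x - x) - Ax‖ ≤ δ := by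
      have := ht
      rw [Set.mem_preimage, Metric.mem_closedBall, dist_eq_norm] at this
      exact this
    calc |f t - g t| = (1 / t) * |infDist (S t x + t • v) K - infDist (x + t • (Ax + v)) K| := by
          rw [hf, hg, ← mul_sub, abs_mul, abs_of_nonneg (by positivity : (0:ℝ) ≤ 1 / t)]
      _ ≤ (1 / t) * ‖S t x - x - t • Ax‖ := by
          apply mul_le_mul_of_nonneg_left h1 (by positivity)
      _ = ‖t⁻¹ • (S t x - x) - Ax‖ := h2
      _ ≤ δ := hmem
  constructor
  · intro h
    refine aux_liminf_le _ f g hg0 (fun δ hδ => ?_) (fun δ hδ => ?_) ε hε h <;>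
      · filter_upwards [key δ hδ] with t ht
        have := abs_le.mp ht; linarith
  · intro h
    refine aux_liminf_le _ g f hf0 (fun δ hδ => ?_) (fun δ hδ => ?_) ε hε h <;>
      · filter_upwards [key δ hδ] with t ht
        have := abs_le.mp ht; linarith
end

section
/- Let H be the Filipović space with inner product ⟨h,g⟩ = h(∞)g(∞) + ∫₀^∞ h'(x)g'(x)e^{γx} dx, and let K = {h ∈ H : h(x) ≥ 0 for all x ≥ 0} be the cone of nonnegative curves. Then for every h ∈ H, d_K(h) ≤ ‖h⁻‖, where h⁻ = max(−h, 0) is the negative part of h. -/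
open MeasureTheory Filter Set Topology

/-- In the Filipović space (curves with finite norm
`‖h‖² = h(∞)² + ∫₀^∞ h'(x)² e^{γx} dx`), the distance of a curve `h` to the cone `K` of
nonnegative curves is at most the norm of the negative part `h⁻` of `h`. -/
theorem dist_nonneg_cone_le_norm_neg_part (γ : ℝ) (hγ : 0 < γ)
    (h h' : ℝ → ℝ) (Lh : ℝ)
    (hd : ∀ x ∈ Ici (0:ℝ), HasDerivAt h (h' x) x)
    (hlim : Tendsto h atTop (𝓝 Lh))
    (m m' : ℝ → ℝ) (Lm : ℝ)
    (hm : ∀ x ∈ Ici (0:ℝ), m x = max (-(h x)) 0)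
    (hmd : ∀ x ∈ Ici (0:ℝ), HasDerivAt m (m' x) x)
    (hmlim : Tendsto m atTop (𝓝 Lm)) :
    sInf { d : ℝ | ∃ (g g' : ℝ → ℝ) (Lg : ℝ),
        (∀ x ∈ Ici (0:ℝ), HasDerivAt g (g' x) x) ∧
        (∀ x ∈ Ici (0:ℝ), 0 ≤ g x) ∧
        Tendsto g atTop (𝓝 Lg) ∧
        d = Real.sqrt ((Lh - Lg)^2 +
          ∫ x in Ioi (0:ℝ), (h' x - g' x)^2 * Real.exp (γ * x)) } ≤
      Real.sqrt (Lm^2 + ∫ x in Ioi (0:ℝ), (m' x)^2 * Real.exp (γ * x)) := by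
  apply csInf_le
  · refine ⟨0, ?_⟩
    rintro d ⟨g, g', Lg, _, _, _, rfl⟩
    exact Real.sqrt_nonneg _
  · refine ⟨fun x => h x + m x, fun x => h' x + m' x, Lh + Lm, ?_, ?_, ?_, ?_⟩
    · exact fun x hx => (hd x hx).add (hmd x hx)
    · intro x hx
      show 0 ≤ h x + m x
      rw [hm x hx]
      rcases le_or_gt 0 (h x) with hh | hh
      · have : max (-(h x)) 0 = 0 := max_eq_right (by linarith)
        rw [this]; linarith
      · have : max (-(h x)) 0 = -(h x) := max_eq_left (by linarith)
        rw [this]; linarith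
    · exact hlim.add hmlim
    · have : (∫ x in Ioi (0:ℝ), (m' x)^2 * Real.exp (γ * x)) =
          ∫ x in Ioi (0:ℝ), (h' x - (h' x + m' x))^2 * Real.exp (γ * x) := by
        refine integral_congr_ae (Filter.Eventually.of_forall fun x => ?_)
        ring_nf
      rw [this]
      congr 1
      ring
end

section
/- For y, z with γ/2 < y ≤ z, the functions e^{−y·}, e^{−z·} lie in the Filipović space H with norm ‖h‖² = h(∞)² + ∫₀^∞ h'(x)² e^{γx} dx, and ‖e^{−y·} − e^{−z·}‖² ≤ (2/(2y−γ))(1 + 2z²/(2y−γ)²)(y−z)². In particular, the map z ↦ e^{−z·} from (γ/2, ∞) to H is locally Lipschitz continuous. -/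
open MeasureTheory Set

lemma exp_int (c : ℝ) (hc : 0 < c) : IntegrableOn (fun x => Real.exp (-(c * x))) (Ioi 0) := by
  simpa [neg_mul] using exp_neg_integrableOn_Ioi 0 hc

lemma exp_val (c : ℝ) (hc : 0 < c) : ∫ x in Ioi (0:ℝ), Real.exp (-(c * x)) = 1 / c := by
  have h := Real.integral_rpow_mul_exp_neg_mul_Ioi (one_pos) hc
  simp only [sub_self, Real.rpow_zero, one_mul, Real.rpow_one, Real.Gamma_one, mul_one] at h
  exact h

/-- The curves `x ↦ e^{-yx}` and `x ↦ e^{-zx}` belong to the Filipović space for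
`γ/2 < y ≤ z`, and the squared norm of their difference
(`‖h‖² = h(∞)² + ∫₀^∞ h'(x)² e^{γx} dx`, the limits at infinity being `0`) satisfies
the explicit local-Lipschitz bound. -/
theorem exp_curve_locally_lipschitz (γ y z : ℝ) (hγ : 0 < γ) (hy : γ / 2 < y) (hyz : y ≤ z) :
    IntegrableOn (fun x => (y * Real.exp (-y * x))^2 * Real.exp (γ * x)) (Ioi 0) ∧
    IntegrableOn (fun x => (z * Real.exp (-z * x))^2 * Real.exp (γ * x)) (Ioi 0) ∧
    (∫ x in Ioi (0:ℝ), (z * Real.exp (-z * x) - y * Real.exp (-y * x))^2 * Real.exp (γ * x)) ≤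
      2 / (2 * y - γ) * (1 + 2 * z^2 / (2 * y - γ)^2) * (y - z)^2 := by
  have ha : 0 < 2 * y - γ := by linarith
  have hb : 0 < y + z - γ := by linarith
  have hc : 0 < 2 * z - γ := by linarith
  have sq_eq : ∀ w x : ℝ, (w * Real.exp (-w * x))^2 * Real.exp (γ * x)
      = w^2 * Real.exp (-((2 * w - γ) * x)) := by
    intro w x
    have he : Real.exp (-((2 * w - γ) * x))
        = Real.exp (-w * x) * Real.exp (-w * x) * Real.exp (γ * x) := by
      rw [← Real.exp_add, ← Real.exp_add]; congr 1; ring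
    rw [he]; ring
  have int1 : IntegrableOn (fun x => (y * Real.exp (-y * x))^2 * Real.exp (γ * x)) (Ioi 0) := by
    have hf : (fun x => (y * Real.exp (-y * x))^2 * Real.exp (γ * x))
        = fun x => y^2 * Real.exp (-((2 * y - γ) * x)) := funext fun x => sq_eq y x
    rw [hf]
    exact (exp_int _ ha).const_mul _
  have int2 : IntegrableOn (fun x => (z * Real.exp (-z * x))^2 * Real.exp (γ * x)) (Ioi 0) := by
    have hf : (fun x => (z * Real.exp (-z * x))^2 * Real.exp (γ * x))
        = fun x => z^2 * Real.exp (-((2 * z - γ) * x)) := funext fun x => sq_eq z x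
    rw [hf]
    exact (exp_int _ hc).const_mul _
  refine ⟨int1, int2, ?_⟩
  have hx : ∀ x : ℝ, (z * Real.exp (-z * x) - y * Real.exp (-y * x))^2 * Real.exp (γ * x)
      = z^2 * Real.exp (-((2 * z - γ) * x)) - 2 * y * z * Real.exp (-((y + z - γ) * x))
        + y^2 * Real.exp (-((2 * y - γ) * x)) := by
    intro x
    have e1 : Real.exp (-((2 * z - γ) * x))
        = Real.exp (-z * x) * Real.exp (-z * x) * Real.exp (γ * x) := by
      rw [← Real.exp_add, ← Real.exp_add]; congr 1; ring
    have e2 : Real.exp (-((y + z - γ) * x))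
        = Real.exp (-z * x) * Real.exp (-y * x) * Real.exp (γ * x) := by
      rw [← Real.exp_add, ← Real.exp_add]; congr 1; ring
    have e3 : Real.exp (-((2 * y - γ) * x))
        = Real.exp (-y * x) * Real.exp (-y * x) * Real.exp (γ * x) := by
      rw [← Real.exp_add, ← Real.exp_add]; congr 1; ring
    rw [e1, e2, e3]; ring
  have ic : Integrable (fun x => z^2 * Real.exp (-((2 * z - γ) * x)))
      (volume.restrict (Ioi 0)) := (exp_int _ hc).const_mul _
  have ib : Integrable (fun x => 2 * y * z * Real.exp (-((y + z - γ) * x)))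
      (volume.restrict (Ioi 0)) := (exp_int _ hb).const_mul _
  have ia : Integrable (fun x => y^2 * Real.exp (-((2 * y - γ) * x)))
      (volume.restrict (Ioi 0)) := (exp_int _ ha).const_mul _
  have hI : (∫ x in Ioi (0:ℝ), (z * Real.exp (-z * x) - y * Real.exp (-y * x))^2
      * Real.exp (γ * x))
      = z^2 / (2 * z - γ) - 2 * y * z / (y + z - γ) + y^2 / (2 * y - γ) := by
    have hcong : (∫ x in Ioi (0:ℝ), (z * Real.exp (-z * x) - y * Real.exp (-y * x))^2
        * Real.exp (γ * x))
        = ∫ x in Ioi (0:ℝ), (z^2 * Real.exp (-((2 * z - γ) * x))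
          - 2 * y * z * Real.exp (-((y + z - γ) * x))
          + y^2 * Real.exp (-((2 * y - γ) * x))) := by
      congr 1; funext x; exact hx x
    have isub : Integrable (fun x => z^2 * Real.exp (-((2 * z - γ) * x))
        - 2 * y * z * Real.exp (-((y + z - γ) * x))) (volume.restrict (Ioi 0)) := ic.sub ib
    rw [hcong, integral_add isub ia, integral_sub ic ib,
      integral_const_mul, integral_const_mul, integral_const_mul,
      exp_val _ ha, exp_val _ hb, exp_val _ hc]
    ring
  rw [hI]
  have key : z^2 / (2 * z - γ) - 2 * y * z / (y + z - γ) + y^2 / (2 * y - γ)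
      = (z - y)^2 * (((2 * y - γ) * (2 * z - γ) + γ^2)
        / ((2 * y - γ) * (2 * z - γ) * (2 * (y + z - γ)))) := by
    rw [div_sub_div _ _ hc.ne' hb.ne', div_add_div _ _ (mul_ne_zero hc.ne' hb.ne') ha.ne', mul_div_assoc',
      div_eq_div_iff (mul_ne_zero (mul_ne_zero hc.ne' hb.ne') ha.ne')
        (mul_ne_zero (mul_ne_zero ha.ne' hc.ne') (mul_ne_zero two_ne_zero hb.ne'))]
    ring
  rw [key]
  have h1 : ((2 * y - γ) * (2 * z - γ) + γ^2)
      / ((2 * y - γ) * (2 * z - γ) * (2 * (y + z - γ)))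
      ≤ 2 / (2 * y - γ) * (1 + 2 * z^2 / (2 * y - γ)^2) := by
    have hzpos : 0 < z := by linarith
    have hγz : γ ≤ 2 * z := by linarith
    have hac : 2 * y - γ ≤ 2 * z - γ := by linarith
    have hs : 2 * y - γ ≤ y + z - γ := by linarith
    have hγsq : γ^2 ≤ 4 * z^2 := by nlinarith
    have hg2 : γ^2 * (2 * y - γ) ≤ 8 * z^2 * (2 * z - γ) := by
      nlinarith [mul_le_mul_of_nonneg_right hγsq ha.le,
        mul_le_mul_of_nonneg_left hac (by positivity : (0:ℝ) ≤ 4 * z^2),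
        mul_nonneg (by positivity : (0:ℝ) ≤ 4 * z^2) hc.le]
    have hRHS : 2 / (2 * y - γ) * (1 + 2 * z^2 / (2 * y - γ)^2)
        = (2 * (2 * y - γ)^2 + 4 * z^2) / (2 * y - γ)^3 := by
      field_simp; ring
    rw [hRHS, div_le_div_iff₀ (by positivity) (by positivity)]
    nlinarith [mul_le_mul_of_nonneg_left hs
        (by positivity : (0:ℝ) ≤ 4 * (2 * y - γ)^2 * (2 * z - γ)),
      mul_le_mul_of_nonneg_left hs
        (by positivity : (0:ℝ) ≤ 8 * z^2 * (2 * y - γ) * (2 * z - γ)),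
      mul_le_mul_of_nonneg_right hg2 (sq_nonneg (2 * y - γ)),
      mul_pos (mul_pos (mul_pos ha ha) (mul_pos ha ha)) hc]
  calc (z - y)^2 * (((2 * y - γ) * (2 * z - γ) + γ^2)
        / ((2 * y - γ) * (2 * z - γ) * (2 * (y + z - γ))))
      ≤ (z - y)^2 * (2 / (2 * y - γ) * (1 + 2 * z^2 / (2 * y - γ)^2)) :=
        mul_le_mul_of_nonneg_left h1 (sq_nonneg _)
    _ = 2 / (2 * y - γ) * (1 + 2 * z^2 / (2 * y - γ)^2) * (y - z)^2 := by ring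
end

section
/- Let H be the Filipović space with weight e^{γx} and inner product ⟨h,g⟩ = h(∞)g(∞) + ∫₀^∞ h'(x)g'(x)e^{γx}dx, let z > γ, and set h(x) = e^{−zx}. Then for every g in the domain of the generator d/dx (i.e., g ∈ H with g' ∈ H), ⟨g', h'⟩ = −z²( g'(0) + ((z−γ)/z) ⟨g, h⟩ ). -/
open MeasureTheory Filter Set Topology

/-- In the Filipović space with inner product
`⟨a,b⟩ = a(∞)b(∞) + ∫₀^∞ a'(x)b'(x)e^{γx}dx`, for `h(x) = e^{-zx}` with `z > γ`
(so `h'(x) = -z e^{-zx}`, `h''(x) = z² e^{-zx}`, `h(∞) = h'(∞) = 0`) and any `g` in the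
domain of `d/dx`, one has `⟨g', h'⟩ = -z² (g'(0) + ((z-γ)/z) ⟨g, h⟩)`. -/
theorem inner_deriv_exp_curve (γ z : ℝ) (hγ : 0 < γ) (hz : γ < z)
    (g g' g'' : ℝ → ℝ) (Lg Lg' : ℝ)
    (hg : ∀ x ∈ Ici (0:ℝ), HasDerivAt g (g' x) x)
    (hg' : ∀ x ∈ Ici (0:ℝ), HasDerivAt g' (g'' x) x)
    (hLg : Tendsto g atTop (𝓝 Lg))
    (hLg' : Tendsto g' atTop (𝓝 Lg'))
    (hint : IntegrableOn (fun x => g'' x * (z^2 * Real.exp (-z * x)) * Real.exp (γ * x)) (Ioi 0))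
    (hint2 : IntegrableOn (fun x => g' x * (-(z * Real.exp (-z * x))) * Real.exp (γ * x)) (Ioi 0)) :
    Lg' * 0 + (∫ x in Ioi (0:ℝ), g'' x * (z^2 * Real.exp (-z * x)) * Real.exp (γ * x)) =
      -(z^2) * (g' 0 + ((z - γ) / z) *
        (Lg * 0 + ∫ x in Ioi (0:ℝ), g' x * (-(z * Real.exp (-z * x))) * Real.exp (γ * x))) := by
  have hzpos : 0 < z := hγ.trans hz
  set c : ℝ := z - γ with hc
  have hcpos : 0 < c := sub_pos.mpr hz
  -- rewrite exponentials
  have hexp : ∀ x : ℝ, Real.exp (-z * x) * Real.exp (γ * x) = Real.exp (-c * x) := by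
    intro x; rw [← Real.exp_add, hc]; ring_nf
  have heq1 : ∀ x : ℝ, g'' x * (z^2 * Real.exp (-z * x)) * Real.exp (γ * x)
      = z^2 * (g'' x * Real.exp (-c * x)) := by
    intro x; rw [show g'' x * (z^2 * Real.exp (-z * x)) * Real.exp (γ * x)
      = z^2 * (g'' x * (Real.exp (-z * x) * Real.exp (γ * x))) by ring, hexp]
  have heq2 : ∀ x : ℝ, g' x * (-(z * Real.exp (-z * x))) * Real.exp (γ * x)
      = -z * (g' x * Real.exp (-c * x)) := by
    intro x; rw [show g' x * (-(z * Real.exp (-z * x))) * Real.exp (γ * x)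
      = -z * (g' x * (Real.exp (-z * x) * Real.exp (γ * x))) by ring, hexp]
  have hint1' : IntegrableOn (fun x => g'' x * Real.exp (-c * x)) (Ioi 0) := by
    have h := hint.const_mul (z^2)⁻¹
    refine h.congr (ae_of_all _ fun x => ?_)
    dsimp only; rw [heq1]; field_simp
  have hint2' : IntegrableOn (fun x => g' x * Real.exp (-c * x)) (Ioi 0) := by
    have h := hint2.const_mul (-z)⁻¹
    refine h.congr (ae_of_all _ fun x => ?_)
    dsimp only; rw [heq2]; field_simp
  -- integration by parts via FTC on Ioi
  have hF : ∀ x ∈ Ici (0:ℝ), HasDerivAt (fun x => g' x * Real.exp (-c * x))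
      (g'' x * Real.exp (-c * x) + (-c) * (g' x * Real.exp (-c * x))) x := by
    intro x hx
    have he : HasDerivAt (fun x => Real.exp (-c * x)) (-c * Real.exp (-c * x)) x := by
      have := ((hasDerivAt_id x).const_mul (-c)).exp
      convert this using 1
      show _ = Real.exp (-c * x) * (-c * 1); ring
      rfl
    have := (hg' x hx).mul he
    exact this.congr_deriv (by ring)
  have htend : Tendsto (fun x => g' x * Real.exp (-c * x)) atTop (𝓝 0) := by
    have h1 : Tendsto (fun x : ℝ => Real.exp (-c * x)) atTop (𝓝 0) := by
      have hb : Tendsto (fun x : ℝ => -c * x) atTop atBot :=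
        Tendsto.const_mul_atTop_of_neg (neg_neg_iff_pos.mpr hcpos) tendsto_id
      exact Real.tendsto_exp_atBot.comp hb
    simpa using hLg'.mul h1
  have hintsum : IntegrableOn (fun x => g'' x * Real.exp (-c * x) + (-c) * (g' x * Real.exp (-c * x))) (Ioi 0) :=
    hint1'.add (hint2'.const_mul _)
  have hIBP := integral_Ioi_of_hasDerivAt_of_tendsto' hF hintsum htend
  simp only [mul_zero, zero_sub] at hIBP
  rw [MeasureTheory.integral_add hint1' (hint2'.const_mul _)] at hIBP
  rw [MeasureTheory.integral_const_mul] at hIBP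
  have e1 : (∫ x in Ioi (0:ℝ), g'' x * (z^2 * Real.exp (-z * x)) * Real.exp (γ * x))
      = z^2 * ∫ x in Ioi (0:ℝ), g'' x * Real.exp (-c * x) := by
    rw [← MeasureTheory.integral_const_mul]
    exact MeasureTheory.setIntegral_congr_fun measurableSet_Ioi (fun x _ => heq1 x)
  have e2 : (∫ x in Ioi (0:ℝ), g' x * (-(z * Real.exp (-z * x))) * Real.exp (γ * x))
      = -z * ∫ x in Ioi (0:ℝ), g' x * Real.exp (-c * x) := by
    rw [← MeasureTheory.integral_const_mul]
    exact MeasureTheory.setIntegral_congr_fun measurableSet_Ioi (fun x _ => heq2 x)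
  rw [e1, e2]
  have hI : (∫ x in Ioi (0:ℝ), g'' x * Real.exp (-c * x))
      = -(g' 0) + c * ∫ x in Ioi (0:ℝ), g' x * Real.exp (-c * x) := by
    simp only [Real.exp_zero, mul_one] at hIBP; linarith
  rw [hI]
  field_simp
  ring
end

section
/- On the Filipović space H (norm ‖h‖² = h(∞)² + ∫₀^∞ h'(x)² e^{γx} dx) with domain D = {g ∈ H : g' ∈ H}, the linear functional ℓ(g) = g'(0) is unbounded with respect to the H-norm: there exists a sequence (g_n) ⊂ D with ‖g_n‖² ≤ e^γ/2 for all n but g_n'(0) = √n → ∞. -/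
open MeasureTheory Filter Set Topology

private noncomputable def F (n : ℕ) (x : ℝ) : ℝ :=
  Real.sqrt (if x ∈ Icc (0:ℝ) (1 / n) then (n:ℝ) - (n:ℝ)^2 * x else 0)

private lemma F_eq_indicator (n : ℕ) (x : ℝ) :
    F n x = (Icc (0:ℝ) (1/n)).indicator (fun x => Real.sqrt ((n:ℝ) - n^2 * x)) x := by
  unfold F indicator
  split_ifs <;> simp

private lemma F_tendsto (n : ℕ) (hn : 1 ≤ n) :
    Tendsto (fun x => (∫ u in (0:ℝ)..x, F n u) - ∫ u in Ioi (0:ℝ), F n u) atTop (𝓝 0) := by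
  have hc : (0:ℝ) < 1/n := by positivity
  have key : ∀ x : ℝ, 1/(n:ℝ) ≤ x →
      (∫ u in (0:ℝ)..x, F n u) - (∫ u in Ioi (0:ℝ), F n u) = 0 := by
    intro x hx
    have h1 : (∫ u in (0:ℝ)..x, F n u) = ∫ u in Ioc (0:ℝ) (1/n), Real.sqrt ((n:ℝ) - n^2 * u) := by
      rw [intervalIntegral.integral_of_le (hc.le.trans hx)]
      have : ∀ u, F n u = (Icc (0:ℝ) (1/n)).indicator (fun x => Real.sqrt ((n:ℝ) - n^2 * x)) u :=
        F_eq_indicator n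
      rw [MeasureTheory.integral_congr_ae (Filter.Eventually.of_forall this)]
      rw [MeasureTheory.setIntegral_indicator measurableSet_Icc]
      have hset : Ioc (0:ℝ) x ∩ Icc 0 (1/n) = Ioc (0:ℝ) (1/n) := by
        ext u
        simp only [mem_inter_iff, mem_Icc, mem_Ioc]
        constructor
        · rintro ⟨⟨h3, _⟩, _, h2⟩; exact ⟨h3, h2⟩
        · rintro ⟨h1', h2⟩; exact ⟨⟨h1', h2.trans hx⟩, h1'.le, h2⟩
      rw [hset]
    have h2 : (∫ u in Ioi (0:ℝ), F n u) = ∫ u in Ioc (0:ℝ) (1/n), Real.sqrt ((n:ℝ) - n^2 * u) := by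
      rw [MeasureTheory.integral_congr_ae (Filter.Eventually.of_forall (fun u => F_eq_indicator n u))]
      rw [MeasureTheory.setIntegral_indicator measurableSet_Icc]
      have hset : Ioi (0:ℝ) ∩ Icc 0 (1/n) = Ioc (0:ℝ) (1/n) := by
        ext u
        simp only [mem_inter_iff, mem_Icc, mem_Ioi, mem_Ioc]
        constructor
        · rintro ⟨h3, _, h2⟩; exact ⟨h3, h2⟩
        · rintro ⟨h1', h2⟩; exact ⟨h1', h1'.le, h2⟩
      rw [hset]
    rw [h1, h2, sub_self]
  exact tendsto_const_nhds.congr' (by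
    filter_upwards [eventually_ge_atTop (1/(n:ℝ))] with x hx using (key x hx).symm)

set_option maxHeartbeats 1000000 in
private lemma F_norm_bound (γ : ℝ) (hγ : 0 < γ) (n : ℕ) (hn : 1 ≤ n) :
    (∫ x in Ioi (0:ℝ), (F n x)^2 * Real.exp (γ * x)) ≤ Real.exp γ / 2 := by
  have hn' : (0:ℝ) < n := by exact_mod_cast hn
  have hc : (0:ℝ) < 1/n := by positivity
  have hc1 : (1:ℝ)/n ≤ 1 := by
    rw [div_le_one hn']; exact_mod_cast hn
  have hnn : (n:ℝ)^2 * (1/n) = n := by field_simp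
  have hpos : ∀ x : ℝ, x ≤ 1/n → 0 ≤ (n:ℝ) - n^2 * x := by
    intro x hx
    have := mul_le_mul_of_nonneg_left hx (sq_nonneg (n:ℝ))
    linarith [hnn ▸ this]
  have hpt : ∀ x : ℝ, (F n x)^2 * Real.exp (γ * x)
      = (Icc (0:ℝ) (1/n)).indicator (fun x => ((n:ℝ) - n^2 * x) * Real.exp (γ*x)) x := by
    intro x
    unfold F indicator
    split_ifs with h
    · rw [Real.sq_sqrt (hpos x h.2)]
    · simp
  have hset : Ioi (0:ℝ) ∩ Icc 0 (1/n) = Ioc (0:ℝ) (1/n) := by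
    ext u
    simp only [mem_inter_iff, mem_Icc, mem_Ioi, mem_Ioc]
    constructor
    · rintro ⟨h3, _, h2⟩; exact ⟨h3, h2⟩
    · rintro ⟨h1', h2⟩; exact ⟨h1', h1'.le, h2⟩
  rw [MeasureTheory.integral_congr_ae (Filter.Eventually.of_forall hpt),
      MeasureTheory.setIntegral_indicator measurableSet_Icc, hset]
  have hmono : ∫ x in Ioc (0:ℝ) (1/n), ((n:ℝ) - n^2*x) * Real.exp (γ*x)
      ≤ ∫ x in Ioc (0:ℝ) (1/n), ((n:ℝ) - n^2*x) * Real.exp γ := by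
    apply setIntegral_mono_on
    · exact Continuous.integrableOn_Ioc (by continuity)
    · exact Continuous.integrableOn_Ioc (by continuity)
    · exact measurableSet_Ioc
    · intro x hx
      have h0 : 0 ≤ (n:ℝ) - n^2 * x := hpos x hx.2
      have he : Real.exp (γ*x) ≤ Real.exp γ := by
        apply Real.exp_le_exp.mpr
        nlinarith [hx.2, hγ]
      exact mul_le_mul_of_nonneg_left he h0
  have hval : ∫ x in Ioc (0:ℝ) (1/n), ((n:ℝ) - n^2*x) * Real.exp γ = Real.exp γ / 2 := by
    rw [← intervalIntegral.integral_of_le hc.le, intervalIntegral.integral_mul_const]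
    have : ∫ x in (0:ℝ)..(1/n), ((n:ℝ) - n^2*x) = 1/2 := by
      have hint : IntervalIntegrable (fun x : ℝ => (n:ℝ)^2 * x) volume 0 (1/n) :=
        (continuous_const.mul continuous_id).intervalIntegrable _ _
      rw [intervalIntegral.integral_sub intervalIntegrable_const hint,
          intervalIntegral.integral_const, intervalIntegral.integral_const_mul,
          integral_id]
      field_simp
      ring
      rw [mul_inv_cancel₀ hn'.ne']; norm_num
    rw [this]; ring
  linarith

/-- The linear functional `g ↦ g'(0)` is unbounded on the domain of `d/dx` in the
Filipović space: the curves `g_n` built from `f_n(x) = √((n - n²x)𝟙_{[0,1/n]}(x))` satisfy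
`g_n(∞) = 0`, `‖g_n‖² = ∫₀^∞ f_n(x)² e^{γx} dx ≤ e^γ/2`, while `g_n'(0) = f_n(0) = √n → ∞`. -/
theorem deriv_at_zero_functional_unbounded (γ : ℝ) (hγ : 0 < γ) :
    ∃ (f : ℕ → ℝ → ℝ) (g : ℕ → ℝ → ℝ),
      (∀ n x, f n x = Real.sqrt (if x ∈ Icc (0:ℝ) (1 / n) then n - n^2 * x else 0)) ∧
      (∀ n x, g n x = (∫ u in (0:ℝ)..x, f n u) - ∫ u in Ioi (0:ℝ), f n u) ∧
      (∀ n : ℕ, 1 ≤ n → Tendsto (g n) atTop (𝓝 0)) ∧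
      (∀ n : ℕ, 1 ≤ n →
        (∫ x in Ioi (0:ℝ), (f n x)^2 * Real.exp (γ * x)) ≤ Real.exp γ / 2) ∧
      (∀ n : ℕ, f n 0 = Real.sqrt n) ∧
      Tendsto (fun n : ℕ => Real.sqrt n) atTop atTop := by
  refine ⟨F, fun n x => (∫ u in (0:ℝ)..x, F n u) - ∫ u in Ioi (0:ℝ), F n u,
    fun n x => rfl, fun n x => rfl, fun n hn => F_tendsto n hn,
    fun n hn => F_norm_bound γ hγ n hn, ?_, ?_⟩
  · intro n
    unfold F
    rw [if_pos ⟨le_refl 0, by positivity⟩]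
    norm_num
  · have h1 : Tendsto (fun x : ℝ => x ^ (1/2 : ℝ)) atTop atTop :=
      tendsto_rpow_atTop (by norm_num)
    have h2 : Tendsto (fun n : ℕ => (n:ℝ)) atTop atTop := tendsto_natCast_atTop_atTop
    have := h1.comp h2
    refine this.congr fun n => ?_
    simp [Function.comp, Real.sqrt_eq_rpow]
end
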